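/- Suppose Σ̄ ∈ P(X) is a weakly compatible irreducible collection of partial splits of X that is closed under the Y-rule θ_Y (i.e. every application of θ_Y to Σ̄ is trivial), and suppose Σ_r, Σ_{r+1} ∈ P(X) with Σ_r weakly compatible, Σ_r ⪯ Σ̄, and Σ_{r+1} obtained from Σ_r by a single application of θ_Y. Then Σ_{r+1} is weakly compatible and Σ_{r+1} ⪯ Σ̄. -/
import Mathlib


/-!
Common definitions: partial splits of a finite set `X`, modelled as unordered
pairs (`Sym2`) of nonempty disjoint subsets of `X`; the `M`-, `Y`- and `Z`-
closure rules; weak compatibility; `X`-cycles and display; split closure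
sequences and split closures.
-/

variable {X : Type*}

/-- `S` is a partial split of `X`: an unordered pair of nonempty disjoint subsets of `X`. -/
def IsPartialSplit (S : Sym2 (Set X)) : Prop :=
  ∃ A B : Set X, S = s(A, B) ∧ A.Nonempty ∧ B.Nonempty ∧ Disjoint A B

/-- `S` is a full split of `X`: a partial split whose two parts cover `X`. -/
def IsFullSplit (S : Sym2 (Set X)) : Prop :=
  ∃ A B : Set X, S = s(A, B) ∧ A.Nonempty ∧ B.Nonempty ∧ Disjoint A B ∧ A ∪ B = Set.univ

/-- The partial split `S` extends the partial split `T`. -/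
def SplitExtends (S T : Sym2 (Set X)) : Prop :=
  ∃ A B C D : Set X, S = s(A, B) ∧ T = s(C, D) ∧ C ⊆ A ∧ D ⊆ B

/-- `Sig ⪯ Sig'`: every partial split of `Sig` is extended by one of `Sig'`. -/
def Preceq (Sig Sig' : Set (Sym2 (Set X))) : Prop :=
  ∀ S ∈ Sig, ∃ T ∈ Sig', SplitExtends T S

/-- `Sig⁻`: the set obtained from `Sig` by removing all redundant partial splits,
i.e. those extended by a different element of `Sig`. -/
def sreduce (Sig : Set (Sym2 (Set X))) : Set (Sym2 (Set X)) :=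
  {S | S ∈ Sig ∧ ¬ ∃ T ∈ Sig, T ≠ S ∧ SplitExtends T S}

/-- `Sig ∈ P(X)`: `Sig` is an irreducible collection of partial splits of `X`. -/
def InPX (Sig : Set (Sym2 (Set X))) : Prop :=
  (∀ S ∈ Sig, IsPartialSplit S) ∧ sreduce Sig = Sig

/-- Two partial splits are compatible if some part of one is disjoint from some part
of the other. -/
def SplitCompatible (S T : Sym2 (Set X)) : Prop :=
  ∃ A B C D : Set X, S = s(A, B) ∧ T = s(C, D) ∧ A ∩ C = ∅

/-- Weak compatibility of a (multi)triple of partial splits: for every choice of parts,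
one of the four distinguished triple intersections is empty. -/
def WeaklyCompatTriple (S1 S2 S3 : Sym2 (Set X)) : Prop :=
  ∀ A1 B1 A2 B2 A3 B3 : Set X,
    S1 = s(A1, B1) → S2 = s(A2, B2) → S3 = s(A3, B3) →
    A1 ∩ A2 ∩ A3 = ∅ ∨ B1 ∩ B2 ∩ A3 = ∅ ∨ B1 ∩ A2 ∩ B3 = ∅ ∨ A1 ∩ B2 ∩ B3 = ∅

/-- A collection of partial splits is weakly compatible if every three of its members are. -/
def WeaklyCompatible (Sig : Set (Sym2 (Set X))) : Prop :=
  ∀ S1 ∈ Sig, ∀ S2 ∈ Sig, ∀ S3 ∈ Sig, WeaklyCompatTriple S1 S2 S3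

/-- Condition of the `M`-rule for the parts `A1|B1`, `A2|B2`. -/
def mCond (A1 B1 A2 B2 : Set X) : Prop :=
  (A1 ∩ A2).Nonempty ∧ (B1 ∩ B2).Nonempty

/-- Output of the `M`-rule applied with respect to the parts `A1|B1`, `A2|B2`. -/
def mOut (A1 B1 A2 B2 : Set X) : Set (Sym2 (Set X)) :=
  {s(A1, B1), s(A2, B2), s(A1 ∩ A2, B1 ∪ B2), s(B1 ∩ B2, A1 ∪ A2)}

/-- Condition of the `Y`-rule for the parts `A1|B1`, `A2|B2`, `A3|B3`. -/
def yCond (A1 B1 A2 B2 A3 B3 : Set X) : Prop :=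
  (A1 ∩ A2 ∩ A3).Nonempty ∧ (B1 ∩ B2 ∩ A3).Nonempty ∧
    (B1 ∩ A2 ∩ B3).Nonempty ∧ A1 ∩ B2 ∩ B3 = ∅

/-- Output of the `Y`-rule applied with respect to the parts `A1|B1`, `A2|B2`, `A3|B3`. -/
def yOut (A1 B1 A2 B2 A3 B3 : Set X) : Set (Sym2 (Set X)) :=
  {s(B1 ∪ (B2 ∩ B3), A1), s(A2 ∪ (A1 ∩ B3), B2), s(A3 ∪ (A1 ∩ B2), B3)}

/-- Condition of the `Z`-rule for the parts `A1|B1`, `A2|B2`. -/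
def zCond (A1 B1 A2 B2 : Set X) : Prop :=
  (A1 ∩ A2).Nonempty ∧ (A2 ∩ B1).Nonempty ∧ (B1 ∩ B2).Nonempty ∧ A1 ∩ B2 = ∅

/-- Output of the `Z`-rule applied with respect to the parts `A1|B1`, `A2|B2`. -/
def zOut (A1 B1 A2 B2 : Set X) : Set (Sym2 (Set X)) :=
  {s(B1 ∪ B2, A1), s(B2, A1 ∪ A2)}

/-- `Sig'` is obtained from `Sig` by a single application of the `Y`-rule. -/
def yStep (Sig Sig' : Set (Sym2 (Set X))) : Prop :=
  ∃ A1 B1 A2 B2 A3 B3 : Set X,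
    s(A1, B1) ∈ Sig ∧ s(A2, B2) ∈ Sig ∧ s(A3, B3) ∈ Sig ∧
    s(A1, B1) ≠ s(A2, B2) ∧ s(A1, B1) ≠ s(A3, B3) ∧ s(A2, B2) ≠ s(A3, B3) ∧
    yCond A1 B1 A2 B2 A3 B3 ∧
    Sig' = sreduce (Sig ∪ yOut A1 B1 A2 B2 A3 B3)

/-- `Sig'` is obtained from `Sig` by a single application of the `M`-rule. -/
def mStep (Sig Sig' : Set (Sym2 (Set X))) : Prop :=
  ∃ A1 B1 A2 B2 : Set X,
    s(A1, B1) ∈ Sig ∧ s(A2, B2) ∈ Sig ∧ s(A1, B1) ≠ s(A2, B2) ∧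
    mCond A1 B1 A2 B2 ∧
    Sig' = sreduce (Sig ∪ mOut A1 B1 A2 B2)

/-- `Sig'` is obtained from `Sig` by a single non-trivial application of the `Y`-rule. -/
def yStepNT (Sig Sig' : Set (Sym2 (Set X))) : Prop :=
  ∃ A1 B1 A2 B2 A3 B3 : Set X,
    s(A1, B1) ∈ Sig ∧ s(A2, B2) ∈ Sig ∧ s(A3, B3) ∈ Sig ∧
    s(A1, B1) ≠ s(A2, B2) ∧ s(A1, B1) ≠ s(A3, B3) ∧ s(A2, B2) ≠ s(A3, B3) ∧
    yCond A1 B1 A2 B2 A3 B3 ∧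
    ¬ Preceq (sreduce (yOut A1 B1 A2 B2 A3 B3)) Sig ∧
    Sig' = sreduce (Sig ∪ yOut A1 B1 A2 B2 A3 B3)

/-- `Sig'` is obtained from `Sig` by a single non-trivial application of the `M`-rule. -/
def mStepNT (Sig Sig' : Set (Sym2 (Set X))) : Prop :=
  ∃ A1 B1 A2 B2 : Set X,
    s(A1, B1) ∈ Sig ∧ s(A2, B2) ∈ Sig ∧ s(A1, B1) ≠ s(A2, B2) ∧
    mCond A1 B1 A2 B2 ∧
    ¬ Preceq (sreduce (mOut A1 B1 A2 B2)) Sig ∧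
    Sig' = sreduce (Sig ∪ mOut A1 B1 A2 B2)

/-- `Sig` is closed under the `Y`-rule: every application of the `Y`-rule to `Sig` is trivial. -/
def yClosed (Sig : Set (Sym2 (Set X))) : Prop :=
  ∀ A1 B1 A2 B2 A3 B3 : Set X,
    s(A1, B1) ∈ Sig → s(A2, B2) ∈ Sig → s(A3, B3) ∈ Sig →
    s(A1, B1) ≠ s(A2, B2) → s(A1, B1) ≠ s(A3, B3) → s(A2, B2) ≠ s(A3, B3) →
    yCond A1 B1 A2 B2 A3 B3 →
    Preceq (sreduce (yOut A1 B1 A2 B2 A3 B3)) Sig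

/-- `Sig` is closed under the `M`-rule: every application of the `M`-rule to `Sig` is trivial. -/
def mClosed (Sig : Set (Sym2 (Set X))) : Prop :=
  ∀ A1 B1 A2 B2 : Set X,
    s(A1, B1) ∈ Sig → s(A2, B2) ∈ Sig → s(A1, B1) ≠ s(A2, B2) →
    mCond A1 B1 A2 B2 →
    Preceq (sreduce (mOut A1 B1 A2 B2)) Sig

/-- A split closure sequence for `Sig` of length `n` with respect to the property `P` and
the non-trivial single-application relation `stepNT`: a strictly `⪯`-increasing sequence
in `P(X)` starting at `Sig` in which every term satisfying `P` is followed by the result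
of one non-trivial application of the rule. -/
def IsClosureSeq (P : Set (Sym2 (Set X)) → Prop)
    (stepNT : Set (Sym2 (Set X)) → Set (Sym2 (Set X)) → Prop)
    (Sig : Set (Sym2 (Set X))) (n : ℕ) (f : ℕ → Set (Sym2 (Set X))) : Prop :=
  f 0 = Sig ∧ (∀ i ≤ n, InPX (f i)) ∧
    (∀ i < n, P (f i) ∧ stepNT (f i) (f (i + 1)) ∧
      Preceq (f i) (f (i + 1)) ∧ f i ≠ f (i + 1))

/-- `cl` is a split closure of `Sig` (with `cl = none` playing the role of `ω`):
the last element of a split closure sequence for `Sig`, which either satisfies `P` and is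
closed under the rule, or fails `P`, in which case it is replaced by `ω`. -/
def IsSplitClosure (P : Set (Sym2 (Set X)) → Prop)
    (stepNT : Set (Sym2 (Set X)) → Set (Sym2 (Set X)) → Prop)
    (closed : Set (Sym2 (Set X)) → Prop)
    (Sig : Set (Sym2 (Set X))) (cl : Option (Set (Sym2 (Set X)))) : Prop :=
  ∃ (n : ℕ) (f : ℕ → Set (Sym2 (Set X))),
    IsClosureSeq P stepNT Sig n f ∧
    ((P (f n) ∧ closed (f n) ∧ cl = some (f n)) ∨ (¬ P (f n) ∧ cl = none))

/-- Split closure with respect to the `Y`-rule, `(P)` being weak compatibility. -/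
def IsYClosure (Sig : Set (Sym2 (Set X))) (cl : Option (Set (Sym2 (Set X)))) : Prop :=
  IsSplitClosure WeaklyCompatible yStepNT yClosed Sig cl

/-- Split closure with respect to the `M`-rule, `(P)` holding for all collections. -/
def IsMClosure (Sig : Set (Sym2 (Set X))) (cl : Option (Set (Sym2 (Set X)))) : Prop :=
  IsSplitClosure (fun _ => True) mStepNT mClosed Sig cl

/-- Split closure with respect to the combined `M/Y`-rule, `(P)` being weak compatibility. -/
def IsMYClosure (Sig : Set (Sym2 (Set X))) (cl : Option (Set (Sym2 (Set X)))) : Prop :=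
  IsSplitClosure WeaklyCompatible
    (fun s s' => mStepNT s s' ∨ yStepNT s s') (fun s => mClosed s ∧ yClosed s) Sig cl

/-- `C` is an `X`-cycle: a connected graph on the vertex set `X` (`|X| ≥ 3`) in which
every vertex has degree `2`. -/
def IsXCycle (C : SimpleGraph X) : Prop :=
  C.Connected ∧ 3 ≤ Nat.card X ∧ ∀ v : X, (C.neighborSet v).ncard = 2

/-- The partial split `S` is displayed by the `X`-cycle `C`: there are two distinct
edges of `C` whose deletion leaves one component containing one part of `S` and
another component containing the other part. -/
def DisplaysSplit (C : SimpleGraph X) (S : Sym2 (Set X)) : Prop :=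
  ∃ A B : Set X, S = s(A, B) ∧
    ∃ e1 e2 : Sym2 X, e1 ∈ C.edgeSet ∧ e2 ∈ C.edgeSet ∧ e1 ≠ e2 ∧
      ∃ c1 c2 : (C.deleteEdges {e1, e2}).ConnectedComponent,
        c1 ≠ c2 ∧ A ⊆ c1.supp ∧ B ⊆ c2.supp

/-- A collection of partial splits is displayed by `C` if each of its members is. -/
def DisplaysColl (C : SimpleGraph X) (Sig : Set (Sym2 (Set X))) : Prop :=
  ∀ S ∈ Sig, DisplaysSplit C S

/-- `cl ≠ ω` and the underlying collection is displayed by `C`. -/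
def OptionDisplays (C : SimpleGraph X) (cl : Option (Set (Sym2 (Set X)))) : Prop :=
  ∃ Sig, cl = some Sig ∧ DisplaysColl C Sig

/-- The ground set `A ∪ B` of a partial split `A|B`. -/
def splitGround (S : Sym2 (Set X)) : Set X :=
  ⋃₀ {A : Set X | A ∈ S}

/-- Membership in `P_ω(X) = P(X) ∪ {ω}`. -/
def InPOmega (x : Option (Set (Sym2 (Set X)))) : Prop :=
  x = none ∨ ∃ Sig, x = some Sig ∧ InPX Sig

/-- The order `⪯` on `P_ω(X)`, with `Sig ⪯ ω` for all `Sig` and `ω ⪯ ω`. -/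
def PreceqO (x y : Option (Set (Sym2 (Set X)))) : Prop :=
  y = none ∨ ∃ Sig Sig', x = some Sig ∧ y = some Sig' ∧ Preceq Sig Sig'

/-- Split closure as a relation on `P_ω(X)`, with `⟨ω⟩ = ω`. -/
def ClosO (cls : Set (Sym2 (Set X)) → Option (Set (Sym2 (Set X))) → Prop)
    (x y : Option (Set (Sym2 (Set X)))) : Prop :=
  (x = none ∧ y = none) ∨ ∃ Sig, x = some Sig ∧ cls Sig y


section Statement9Helpers

variable {X : Type*}

lemma splitExtends_refl (S : Sym2 (Set X)) : SplitExtends S S := by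
  induction S using Sym2.inductionOn with
  | hf A B => exact ⟨A, B, A, B, rfl, rfl, le_refl _, le_refl _⟩

lemma extends_orient {T S : Sym2 (Set X)} {A B : Set X}
    (h : SplitExtends T S) (hS : S = s(A, B)) :
    ∃ C D, T = s(C, D) ∧ A ⊆ C ∧ B ⊆ D := by
  obtain ⟨E, F, G, H, hT, hS', hGE, hHF⟩ := h
  rw [hS, Sym2.eq_iff] at hS'
  rcases hS' with ⟨rfl, rfl⟩ | ⟨rfl, rfl⟩
  · exact ⟨E, F, hT, hGE, hHF⟩
  · exact ⟨F, E, by rw [hT, Sym2.eq_swap], hHF, hGE⟩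

lemma splitExtends_trans {U T S : Sym2 (Set X)} (h1 : SplitExtends U T)
    (h2 : SplitExtends T S) : SplitExtends U S := by
  obtain ⟨E, F, G, H, hT, hS, hGE, hHF⟩ := h2
  obtain ⟨P, Q, hU, hEP, hFQ⟩ := extends_orient h1 hT
  exact ⟨P, Q, G, H, hU, hS, hGE.trans hEP, hHF.trans hFQ⟩

lemma isPartialSplit_rep {S : Sym2 (Set X)} {A B : Set X} (h : IsPartialSplit S)
    (hS : S = s(A, B)) : A.Nonempty ∧ B.Nonempty ∧ Disjoint A B := by
  obtain ⟨A', B', hS', hA', hB', hd⟩ := h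
  rw [hS, Sym2.eq_iff] at hS'
  rcases hS' with ⟨rfl, rfl⟩ | ⟨rfl, rfl⟩
  · exact ⟨hA', hB', hd⟩
  · exact ⟨hB', hA', hd.symm⟩

lemma splitExtends_antisymm {S T : Sym2 (Set X)} (hT : IsPartialSplit T)
    (h1 : SplitExtends T S) (h2 : SplitExtends S T) : T = S := by
  obtain ⟨E, F, G, H, hTr, hSr, hGE, hHF⟩ := h1
  obtain ⟨P, Q, hSr2, hEP, hFQ⟩ := extends_orient h2 hTr
  rw [hSr, Sym2.eq_iff] at hSr2
  obtain ⟨hEne, hFne, hd⟩ := isPartialSplit_rep hT hTr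
  rcases hSr2 with ⟨rfl, rfl⟩ | ⟨hGQ, hHP⟩
  · rw [hTr, hSr, subset_antisymm hGE hEP, subset_antisymm hHF hFQ]
  · have hEF : E = F := subset_antisymm (hEP.trans (hHP ▸ hHF)) (hFQ.trans (hGQ ▸ hGE))
    obtain ⟨x, hx⟩ := hEne
    exact absurd (hEF ▸ hx) (Set.disjoint_left.mp hd hx)

lemma exists_sreduce_extends [Finite X] {Sig : Set (Sym2 (Set X))}
    (hps : ∀ S ∈ Sig, IsPartialSplit S) :
    ∀ S ∈ Sig, ∃ T ∈ sreduce Sig, SplitExtends T S := by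
  let r : Sym2 (Set X) → Sym2 (Set X) → Prop :=
    fun T S => T ∈ Sig ∧ S ∈ Sig ∧ SplitExtends T S ∧ T ≠ S
  have htrans : IsTrans (Sym2 (Set X)) r := by
    constructor
    rintro U T S ⟨hU, hT, hUT, hne1⟩ ⟨_, hS, hTS, hne2⟩
    refine ⟨hU, hS, splitExtends_trans hUT hTS, ?_⟩
    rintro rfl
    exact hne2 (splitExtends_antisymm (hps T hT) hTS hUT)
  have hirrefl : IsIrrefl (Sym2 (Set X)) r := ⟨fun S h => h.2.2.2 rfl⟩
  have hwf : WellFounded r := Finite.wellFounded_of_trans_of_irrefl r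
  intro S
  induction S using hwf.induction with
  | _ S ih =>
    intro hS
    by_cases hred : S ∈ sreduce Sig
    · exact ⟨S, hred, splitExtends_refl S⟩
    · have : ∃ T ∈ Sig, T ≠ S ∧ SplitExtends T S := by
        by_contra h; exact hred ⟨hS, h⟩
      obtain ⟨T, hT, hne, hTS⟩ := this
      obtain ⟨U, hU, hUT⟩ := ih T ⟨hT, hS, hTS, hne⟩ hT
      exact ⟨U, hU, splitExtends_trans hUT hTS⟩

lemma wc_of_preceq {Sig Sig' : Set (Sym2 (Set X))}
    (hpre : Preceq Sig Sig') (hwc : WeaklyCompatible Sig') : WeaklyCompatible Sig := by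
  intro S1 h1 S2 h2 S3 h3 A1 B1 A2 B2 A3 B3 e1 e2 e3
  obtain ⟨T1, hT1, hx1⟩ := hpre S1 h1
  obtain ⟨T2, hT2, hx2⟩ := hpre S2 h2
  obtain ⟨T3, hT3, hx3⟩ := hpre S3 h3
  obtain ⟨C1, D1, f1, hA1, hB1⟩ := extends_orient hx1 e1
  obtain ⟨C2, D2, f2, hA2, hB2⟩ := extends_orient hx2 e2
  obtain ⟨C3, D3, f3, hA3, hB3⟩ := extends_orient hx3 e3
  rcases hwc T1 hT1 T2 hT2 T3 hT3 C1 D1 C2 D2 C3 D3 f1 f2 f3 with h | h | h | h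
  · exact Or.inl (Set.eq_empty_of_subset_empty
      (h ▸ Set.inter_subset_inter (Set.inter_subset_inter hA1 hA2) hA3))
  · exact Or.inr (Or.inl (Set.eq_empty_of_subset_empty
      (h ▸ Set.inter_subset_inter (Set.inter_subset_inter hB1 hB2) hA3)))
  · exact Or.inr (Or.inr (Or.inl (Set.eq_empty_of_subset_empty
      (h ▸ Set.inter_subset_inter (Set.inter_subset_inter hB1 hA2) hB3))))
  · exact Or.inr (Or.inr (Or.inr (Set.eq_empty_of_subset_empty
      (h ▸ Set.inter_subset_inter (Set.inter_subset_inter hA1 hB2) hB3))))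

end Statement9Helpers

/-- if `Σ̄ ∈ P(X)` is weakly compatible and closed under the `Y`-rule,
`Σ_r ∈ P(X)` is weakly compatible with `Σ_r ⪯ Σ̄`, and `Σ_{r+1}` is obtained from `Σ_r`
by one application of the `Y`-rule, then `Σ_{r+1}` is weakly compatible and `Σ_{r+1} ⪯ Σ̄`. -/
theorem statement9 {X : Type*} [Fintype X] (SigBar SigR SigR1 : Set (Sym2 (Set X)))
    (hBarPX : InPX SigBar) (hBarWC : WeaklyCompatible SigBar) (hBarCl : yClosed SigBar)
    (hRPX : InPX SigR) (hR1PX : InPX SigR1)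
    (hRWC : WeaklyCompatible SigR) (hpre : Preceq SigR SigBar)
    (hstep : yStep SigR SigR1) :
    WeaklyCompatible SigR1 ∧ Preceq SigR1 SigBar := by
  obtain ⟨A1, B1, A2, B2, A3, B3, m1, m2, m3, _, _, _, hy, hR1⟩ := hstep
  obtain ⟨hn1, hn2, hn3, hEA⟩ := hy
  obtain ⟨T1, hT1, hx1⟩ := hpre _ m1
  obtain ⟨T2, hT2, hx2⟩ := hpre _ m2
  obtain ⟨T3, hT3, hx3⟩ := hpre _ m3
  obtain ⟨C1, D1, f1, hA1, hB1⟩ := extends_orient hx1 rfl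
  obtain ⟨C2, D2, f2, hA2, hB2⟩ := extends_orient hx2 rfl
  obtain ⟨C3, D3, f3, hA3, hB3⟩ := extends_orient hx3 rfl
  obtain ⟨hC1ne, hD1ne, hCD1⟩ := isPartialSplit_rep (hBarPX.1 T1 hT1) f1
  obtain ⟨hC2ne, hD2ne, hCD2⟩ := isPartialSplit_rep (hBarPX.1 T2 hT2) f2
  obtain ⟨hC3ne, hD3ne, hCD3⟩ := isPartialSplit_rep (hBarPX.1 T3 hT3) f3
  have g1 : s(C1, D1) ∈ SigBar := f1 ▸ hT1
  have g2 : s(C2, D2) ∈ SigBar := f2 ▸ hT2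
  have g3 : s(C3, D3) ∈ SigBar := f3 ▸ hT3
  have hn1' : (C1 ∩ C2 ∩ C3).Nonempty :=
    hn1.mono (Set.inter_subset_inter (Set.inter_subset_inter hA1 hA2) hA3)
  have hn2' : (D1 ∩ D2 ∩ C3).Nonempty :=
    hn2.mono (Set.inter_subset_inter (Set.inter_subset_inter hB1 hB2) hA3)
  have hn3' : (D1 ∩ C2 ∩ D3).Nonempty :=
    hn3.mono (Set.inter_subset_inter (Set.inter_subset_inter hB1 hA2) hB3)
  have hE : C1 ∩ D2 ∩ D3 = ∅ := by
    rcases hBarWC T1 hT1 T2 hT2 T3 hT3 C1 D1 C2 D2 C3 D3 f1 f2 f3 with h | h | h | h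
    · exact absurd h hn1'.ne_empty
    · exact absurd h hn2'.ne_empty
    · exact absurd h hn3'.ne_empty
    · exact h
  have d12 : s(C1, D1) ≠ s(C2, D2) := by
    rw [Ne, Sym2.eq_iff]
    rintro (⟨h1, h2⟩ | ⟨h1, h2⟩)
    · obtain ⟨x, hx⟩ := hn3'
      have hxC1 : x ∈ C1 := by rw [h1]; exact hx.1.2
      exact Set.disjoint_left.mp hCD1 hxC1 hx.1.1
    · obtain ⟨x, hx⟩ := hn1'
      have hxD1 : x ∈ D1 := by rw [h2]; exact hx.1.2
      exact Set.disjoint_left.mp hCD1 hx.1.1 hxD1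
  have d13 : s(C1, D1) ≠ s(C3, D3) := by
    rw [Ne, Sym2.eq_iff]
    rintro (⟨h1, h2⟩ | ⟨h1, h2⟩)
    · obtain ⟨x, hx⟩ := hn2'
      have hxC1 : x ∈ C1 := by rw [h1]; exact hx.2
      exact Set.disjoint_left.mp hCD1 hxC1 hx.1.1
    · obtain ⟨x, hx⟩ := hn1'
      have hxD1 : x ∈ D1 := by rw [h2]; exact hx.2
      exact Set.disjoint_left.mp hCD1 hx.1.1 hxD1
  have d23 : s(C2, D2) ≠ s(C3, D3) := by
    rw [Ne, Sym2.eq_iff]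
    rintro (⟨h1, h2⟩ | ⟨h1, h2⟩)
    · obtain ⟨x, hx⟩ := hn3'
      have hxD2 : x ∈ D2 := by rw [h2]; exact hx.2
      exact Set.disjoint_left.mp hCD2 hx.1.2 hxD2
    · obtain ⟨x, hx⟩ := hn1'
      have hxD2 : x ∈ D2 := by rw [h2]; exact hx.2
      exact Set.disjoint_left.mp hCD2 hx.1.2 hxD2
  have hPre' : Preceq (sreduce (yOut C1 D1 C2 D2 C3 D3)) SigBar :=
    hBarCl C1 D1 C2 D2 C3 D3 g1 g2 g3 d12 d13 d23 ⟨hn1', hn2', hn3', hE⟩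
  have hps : ∀ U ∈ yOut C1 D1 C2 D2 C3 D3, IsPartialSplit U := by
    intro U hU
    simp only [yOut, Set.mem_insert_iff, Set.mem_singleton_iff] at hU
    rcases hU with rfl | rfl | rfl
    · refine ⟨D1 ∪ D2 ∩ D3, C1, rfl, hD1ne.mono Set.subset_union_left, hC1ne, ?_⟩
      rw [Set.disjoint_union_left]
      refine ⟨hCD1.symm, Set.disjoint_left.mpr fun x hx hxC => ?_⟩
      have : x ∈ C1 ∩ D2 ∩ D3 := ⟨⟨hxC, hx.1⟩, hx.2⟩
      rw [hE] at this; exact this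
    · refine ⟨C2 ∪ C1 ∩ D3, D2, rfl, hC2ne.mono Set.subset_union_left, hD2ne, ?_⟩
      rw [Set.disjoint_union_left]
      refine ⟨hCD2, Set.disjoint_left.mpr fun x hx hxD => ?_⟩
      have : x ∈ C1 ∩ D2 ∩ D3 := ⟨⟨hx.1, hxD⟩, hx.2⟩
      rw [hE] at this; exact this
    · refine ⟨C3 ∪ C1 ∩ D2, D3, rfl, hC3ne.mono Set.subset_union_left, hD3ne, ?_⟩
      rw [Set.disjoint_union_left]
      refine ⟨hCD3, Set.disjoint_left.mpr fun x hx hxD => ?_⟩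
      have : x ∈ C1 ∩ D2 ∩ D3 := ⟨⟨hx.1, hx.2⟩, hxD⟩
      rw [hE] at this; exact this
  have key : ∀ U ∈ yOut C1 D1 C2 D2 C3 D3, ∃ W ∈ SigBar, SplitExtends W U := by
    intro U hU
    obtain ⟨V, hV, hVU⟩ := exists_sreduce_extends hps U hU
    obtain ⟨W, hW, hWV⟩ := hPre' V hV
    exact ⟨W, hW, splitExtends_trans hWV hVU⟩
  have hfinal : Preceq SigR1 SigBar := by
    intro S hS
    rw [hR1] at hS
    rcases hS.1 with h | h
    · exact hpre S h
    · simp only [yOut, Set.mem_insert_iff, Set.mem_singleton_iff] at h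
      rcases h with rfl | rfl | rfl
      · obtain ⟨W, hW, hWU⟩ := key s(D1 ∪ D2 ∩ D3, C1) (by left; rfl)
        exact ⟨W, hW, splitExtends_trans hWU
          ⟨D1 ∪ D2 ∩ D3, C1, B1 ∪ B2 ∩ B3, A1, rfl, rfl,
            Set.union_subset_union hB1 (Set.inter_subset_inter hB2 hB3), hA1⟩⟩
      · obtain ⟨W, hW, hWU⟩ := key s(C2 ∪ C1 ∩ D3, D2) (by right; left; rfl)
        exact ⟨W, hW, splitExtends_trans hWU
          ⟨C2 ∪ C1 ∩ D3, D2, A2 ∪ A1 ∩ B3, B2, rfl, rfl,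
            Set.union_subset_union hA2 (Set.inter_subset_inter hA1 hB3), hB2⟩⟩
      · obtain ⟨W, hW, hWU⟩ := key s(C3 ∪ C1 ∩ D2, D3) (by right; right; rfl)
        exact ⟨W, hW, splitExtends_trans hWU
          ⟨C3 ∪ C1 ∩ D2, D3, A3 ∪ A1 ∩ B2, B3, rfl, rfl,
            Set.union_subset_union hA3 (Set.inter_subset_inter hA1 hB2), hB3⟩⟩
  exact ⟨wc_of_preceq hfinal hBarWC, hfinal⟩
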